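/- arXiv:1909.01403 — 3 statements merged into one kernel-verified Lean document; each statement's English description precedes it below -/
import Mathlib

section
/- Let $D$ be a diagram of size $n$ and $u \in S_n$ such that $t^D u$ is a standard $D$-tableau. If $u \ne w_D$, then there exists $k$ with $1 \le k \le n-1$ such that $N^-(u) \subsetneq N^-(u s_k) \subseteq N^-(w_D)$ and $t^D u s_k$ is again a standard $D$-tableau. Consequently, the map $u \mapsto t^D u$ is a bijection from the set of prefixes of $w_D$ (elements $x$ such that $w_D$ has a reduced expression beginning with a reduced expression for $x$) onto the set of standard $D$-tableaux. -/
/-- Number of inversions of a permutation of `Fin n`; this equals its Coxeter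
length with respect to the adjacent transpositions. -/
def invCount (n : ℕ) (u : Equiv.Perm (Fin n)) : ℕ :=
  (Finset.univ.filter (fun p : Fin n × Fin n => p.1 < p.2 ∧ u p.2 < u p.1)).card

/-- `N⁻(u)`: the set of positive roots `ε_i - ε_j` (`i < j`, encoded as pairs)
sent to negative roots by `u`. -/
def Nminus (n : ℕ) (u : Equiv.Perm (Fin n)) : Finset (Fin n × Fin n) :=
  Finset.univ.filter (fun p : Fin n × Fin n => p.1 < p.2 ∧ u p.2 < u p.1)

/-- `g` is an adjacent transposition `s_k = (k, k+1)`. -/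
def IsAdjSwap (n : ℕ) (g : Equiv.Perm (Fin n)) : Prop :=
  ∃ (k : ℕ) (hk : k + 1 < n),
    g = Equiv.swap (⟨k, Nat.lt_of_succ_lt hk⟩ : Fin n) ⟨k + 1, hk⟩

/-- Product of a word of generators in the symmetric group acting on the right:
`s_{a₁} s_{a₂} ⋯ s_{a_m}` corresponds to composition in the reverse order. -/
def wprod (n : ℕ) (L : List (Equiv.Perm (Fin n))) : Equiv.Perm (Fin n) :=
  L.reverse.prod

/-- `x` is a prefix of `y`: some reduced word for `y` begins with a reduced word
for `x`. -/
def IsPrefixOf (n : ℕ) (x y : Equiv.Perm (Fin n)) : Prop :=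
  ∃ L M : List (Equiv.Perm (Fin n)), (∀ g ∈ L ++ M, IsAdjSwap n g) ∧
    wprod n L = x ∧ wprod n (L ++ M) = y ∧
    L.length = invCount n x ∧ (L ++ M).length = invCount n y

/-!
Everything is read off inversion sets. Left multiplication by the adjacent transposition
`s = swap k (k+1)` (the paper's `u s_k`, as permutations act on the right there) adds or
removes exactly the pair `(u⁻¹ k, u⁻¹ (k+1))` in `N⁻(u)`, so along a reduced word `N⁻` grows
one pair at a time and a prefix `x` of `y` has `N⁻(x) ⊆ N⁻(y)`. Conversely, if
`N⁻(u) ⊆ N⁻(w)` and `u ≠ w`, a descent `k` of `w u⁻¹` is an ascent of `u⁻¹`, so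
`N⁻(u) ⊊ N⁻(s u) ⊆ N⁻(w)`; iterating up to `w` shows that `u` is a prefix of `w`.
On the tableau side, an inversion of `u` is a pair of cells `p, q` read in this order by rows,
and `t^D u` is standard exactly when no such pair has `p ≤ q` in both coordinates, i.e. when
`p` lies strictly north-east of `q`; these are precisely the pairs inverted by `w_D`. Hence
`t^D u` is standard iff `N⁻(u) ⊆ N⁻(w_D)` iff `u` is a prefix of `w_D`.
-/

open Equiv Finset

section Inversions
variable {n : ℕ}

@[simp] lemma mem_Nminus {u : Perm (Fin n)} {p : Fin n × Fin n} :
    p ∈ Nminus n u ↔ p.1 < p.2 ∧ u p.2 < u p.1 := by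
  simp [Nminus]

lemma swap_lt_swap_iff {a b c d : Fin n} (hab : (a : ℕ) + 1 = b)
    (h₁ : ¬(c = a ∧ d = b)) (h₂ : ¬(c = b ∧ d = a)) :
    swap a b d < swap a b c ↔ d < c := by
  simp only [Fin.ext_iff] at h₁ h₂
  simp only [swap_apply_def, Fin.lt_def, Fin.ext_iff]
  split_ifs <;> omega

lemma Nminus_swap_mul_of_lt {a b : Fin n} (hab : (a : ℕ) + 1 = b) {u : Perm (Fin n)}
    (h : u.symm a < u.symm b) :
    Nminus n (swap a b * u) = insert (u.symm a, u.symm b) (Nminus n u) := by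
  ext ⟨x, y⟩
  obtain ⟨c, rfl⟩ := u.symm.surjective x
  obtain ⟨d, rfl⟩ := u.symm.surjective y
  have hab' : a < b := Fin.lt_def.2 (by omega)
  simp only [mem_insert, mem_Nminus, Prod.mk.injEq, Perm.mul_apply, apply_symm_apply,
    u.symm.injective.eq_iff]
  by_cases hc : c = a ∧ d = b
  · obtain ⟨rfl, rfl⟩ := hc
    simp [h, hab']
  by_cases hc' : c = b ∧ d = a
  · obtain ⟨rfl, rfl⟩ := hc'
    simp [h.not_gt, hab'.ne']
  rw [swap_lt_swap_iff hab hc hc']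
  tauto

lemma Nminus_swap_mul_of_gt {a b : Fin n} (hab : (a : ℕ) + 1 = b) {u : Perm (Fin n)}
    (h : u.symm b < u.symm a) :
    Nminus n (swap a b * u) = (Nminus n u).erase (u.symm b, u.symm a) := by
  ext ⟨x, y⟩
  obtain ⟨c, rfl⟩ := u.symm.surjective x
  obtain ⟨d, rfl⟩ := u.symm.surjective y
  have hab' : a < b := Fin.lt_def.2 (by omega)
  simp only [mem_erase, mem_Nminus, ne_eq, Prod.mk.injEq, Perm.mul_apply, apply_symm_apply,
    u.symm.injective.eq_iff]
  by_cases hc : c = a ∧ d = b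
  · obtain ⟨rfl, rfl⟩ := hc
    simp [h.not_gt, hab'.ne]
  by_cases hc' : c = b ∧ d = a
  · obtain ⟨rfl, rfl⟩ := hc'
    simp [h, hab'.le]
  rw [swap_lt_swap_iff hab hc hc']
  tauto

lemma exists_adj_descent_of_ne_one {v : Perm (Fin n)} (hv : v ≠ 1) :
    ∃ (k : ℕ) (hk : k + 1 < n), v ⟨k + 1, hk⟩ < v ⟨k, Nat.lt_of_succ_lt hk⟩ := by
  by_contra! h
  apply hv
  cases n with
  | zero => exact Subsingleton.elim _ _
  | succ m =>
    have hmono : StrictMono v := Fin.strictMono_iff_lt_succ.2 fun i =>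
      (h i (by omega)).lt_of_ne (v.injective.ne Fin.castSucc_lt_succ.ne)
    exact Equiv.ext fun _ => hmono.apply_eq

end Inversions

section Length
variable {n : ℕ}

lemma invCount_eq_card (u : Perm (Fin n)) : invCount n u = #(Nminus n u) := rfl

lemma invCount_one : invCount n 1 = 0 := by
  rw [invCount_eq_card, card_eq_zero, eq_empty_iff_forall_notMem]
  exact fun p hp => (mem_Nminus.1 hp).1.asymm (mem_Nminus.1 hp).2

lemma invCount_swap_mul_of_lt {a b : Fin n} (hab : (a : ℕ) + 1 = b) {u : Perm (Fin n)}
    (h : u.symm a < u.symm b) : invCount n (swap a b * u) = invCount n u + 1 := by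
  have hab' : a < b := Fin.lt_def.2 (by omega)
  rw [invCount_eq_card, invCount_eq_card, Nminus_swap_mul_of_lt hab h, card_insert_of_notMem]
  simp [hab'.le]

lemma invCount_swap_mul_of_gt {a b : Fin n} (hab : (a : ℕ) + 1 = b) {u : Perm (Fin n)}
    (h : u.symm b < u.symm a) : invCount n (swap a b * u) + 1 = invCount n u := by
  have hab' : a < b := Fin.lt_def.2 (by omega)
  rw [invCount_eq_card, invCount_eq_card, Nminus_swap_mul_of_gt hab h, card_erase_add_one]
  simp [h, hab']

lemma IsAdjSwap.mul_self {g : Perm (Fin n)} (hg : IsAdjSwap n g) : g * g = 1 := by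
  obtain ⟨k, hk, rfl⟩ := hg
  exact swap_mul_self _ _

lemma IsAdjSwap.invCount_mul {g : Perm (Fin n)} (hg : IsAdjSwap n g) (u : Perm (Fin n)) :
    invCount n (g * u) = invCount n u + 1 ∨ invCount n (g * u) + 1 = invCount n u := by
  obtain ⟨k, hk, rfl⟩ := hg
  have hne : u.symm ⟨k, Nat.lt_of_succ_lt hk⟩ ≠ u.symm ⟨k + 1, hk⟩ :=
    u.symm.injective.ne (by simp)
  rcases hne.lt_or_gt with h | h
  · exact .inl (invCount_swap_mul_of_lt rfl h)
  · exact .inr (invCount_swap_mul_of_gt rfl h)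

lemma IsAdjSwap.Nminus_subset_mul {g u : Perm (Fin n)} (hg : IsAdjSwap n g)
    (h : invCount n u < invCount n (g * u)) : Nminus n u ⊆ Nminus n (g * u) := by
  obtain ⟨k, hk, rfl⟩ := hg
  have hne : u.symm ⟨k, Nat.lt_of_succ_lt hk⟩ ≠ u.symm ⟨k + 1, hk⟩ :=
    u.symm.injective.ne (by simp)
  rcases hne.lt_or_gt with hlt | hgt
  · rw [Nminus_swap_mul_of_lt rfl hlt]
    exact subset_insert _ _
  · have := invCount_swap_mul_of_gt rfl hgt
    omega

lemma exists_isAdjSwap_invCount_mul_add_one {u : Perm (Fin n)} (hu : u ≠ 1) :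
    ∃ g, IsAdjSwap n g ∧ invCount n (g * u) + 1 = invCount n u := by
  obtain ⟨k, hk, h⟩ := exists_adj_descent_of_ne_one (inv_ne_one.2 hu)
  exact ⟨_, ⟨k, hk, rfl⟩, invCount_swap_mul_of_gt rfl h⟩

end Length

section Words
variable {n : ℕ}

lemma wprod_append (L M : List (Perm (Fin n))) : wprod n (L ++ M) = wprod n M * wprod n L := by
  simp [wprod]

lemma wprod_append_singleton (L : List (Perm (Fin n))) (g : Perm (Fin n)) :
    wprod n (L ++ [g]) = g * wprod n L := by
  simp [wprod]

lemma invCount_wprod_le {L : List (Perm (Fin n))} (hL : ∀ g ∈ L, IsAdjSwap n g) :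
    invCount n (wprod n L) ≤ L.length := by
  induction L using List.reverseRecOn with
  | nil => simp [wprod, invCount_one]
  | append_singleton L g ih =>
    have := ih fun x hx => hL x (by simp [hx])
    rw [wprod_append_singleton, List.length_append, List.length_singleton]
    rcases (hL g (by simp)).invCount_mul (wprod n L) with h | h <;> omega

lemma exists_reduced_word (u : Perm (Fin n)) :
    ∃ L : List (Perm (Fin n)), (∀ g ∈ L, IsAdjSwap n g) ∧
      wprod n L = u ∧ L.length = invCount n u := by
  induction hm : invCount n u generalizing u with
  | zero =>
    obtain rfl : u = 1 := by
      by_contra hu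
      obtain ⟨g, -, h⟩ := exists_isAdjSwap_invCount_mul_add_one hu
      omega
    exact ⟨[], by simp, rfl, rfl⟩
  | succ m ih =>
    have hu : u ≠ 1 := by
      rintro rfl
      simp [invCount_one] at hm
    obtain ⟨g, hg, h⟩ := exists_isAdjSwap_invCount_mul_add_one hu
    obtain ⟨L, hL, hLu, hlen⟩ := ih _ (Nat.add_right_cancel (h.trans hm))
    refine ⟨L ++ [g], ?_, ?_, by simp [hlen]⟩
    · simpa [or_imp, forall_and] using ⟨hL, hg⟩
    · rw [wprod_append_singleton, hLu, ← mul_assoc, hg.mul_self, one_mul]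

lemma Nminus_wprod_subset_of_reduced {L M : List (Perm (Fin n))}
    (hLM : ∀ g ∈ L ++ M, IsAdjSwap n g)
    (hred : (L ++ M).length = invCount n (wprod n (L ++ M))) :
    Nminus n (wprod n L) ⊆ Nminus n (wprod n (L ++ M)) := by
  induction M using List.reverseRecOn with
  | nil => simp
  | append_singleton M g ih =>
    rw [← List.append_assoc] at hLM hred ⊢
    rw [wprod_append_singleton] at hred ⊢
    have hg : IsAdjSwap n g := hLM g (by simp)
    have hLM' : ∀ x ∈ L ++ M, IsAdjSwap n x := fun x hx => hLM x (List.mem_append_left _ hx)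
    have hle := invCount_wprod_le hLM'
    rw [List.length_append, List.length_singleton] at hred
    rcases hg.invCount_mul (wprod n (L ++ M)) with h | h
    · exact (ih hLM' (by omega)).trans (hg.Nminus_subset_mul (by omega))
    · omega

end Words

section WeakOrder
variable {n : ℕ}

lemma exists_cover_of_Nminus_subset {u w : Perm (Fin n)} (hsub : Nminus n u ⊆ Nminus n w)
    (hne : u ≠ w) :
    ∃ (k : ℕ) (hk : k + 1 < n),
      Nminus n u ⊂ Nminus n (swap ⟨k, Nat.lt_of_succ_lt hk⟩ ⟨k + 1, hk⟩ * u) ∧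
      Nminus n (swap ⟨k, Nat.lt_of_succ_lt hk⟩ ⟨k + 1, hk⟩ * u) ⊆ Nminus n w := by
  obtain ⟨k, hk, hdesc⟩ :=
    exists_adj_descent_of_ne_one (v := w * u⁻¹) fun h => hne (mul_inv_eq_one.1 h).symm
  refine ⟨k, hk, ?_⟩
  set a : Fin n := ⟨k, Nat.lt_of_succ_lt hk⟩
  set b : Fin n := ⟨k + 1, hk⟩
  have hab : a < b := Fin.lt_def.2 (Nat.lt_succ_self k)
  have hdesc : w (u.symm b) < w (u.symm a) := hdesc
  -- a descent of `w u⁻¹` is an ascent of `u⁻¹`, as `N⁻(u) ⊆ N⁻(w)`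
  have hasc : u.symm a < u.symm b := by
    refine (u.symm.injective.ne hab.ne).lt_or_gt.resolve_right fun hgt => ?_
    have hinv : (u.symm b, u.symm a) ∈ Nminus n u := mem_Nminus.2 ⟨hgt, by simpa using hab⟩
    exact (mem_Nminus.1 (hsub hinv)).2.asymm hdesc
  rw [Nminus_swap_mul_of_lt rfl hasc]
  refine ⟨ssubset_insert ?_, insert_subset (mem_Nminus.2 ⟨hasc, hdesc⟩) hsub⟩
  simp [hab.le]

lemma IsPrefixOf.Nminus_subset {u w : Perm (Fin n)} (h : IsPrefixOf n u w) :
    Nminus n u ⊆ Nminus n w := by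
  obtain ⟨L, M, hLM, rfl, rfl, -, hred⟩ := h
  exact Nminus_wprod_subset_of_reduced hLM hred

lemma isPrefixOf_self (w : Perm (Fin n)) : IsPrefixOf n w w := by
  obtain ⟨L, hL, rfl, hlen⟩ := exists_reduced_word w
  exact ⟨L, [], by simpa using hL, rfl, by simp, hlen, by simpa using hlen⟩

lemma IsPrefixOf.of_adjSwap_mul {g u w : Perm (Fin n)} (hg : IsAdjSwap n g)
    (hlen : invCount n (g * u) = invCount n u + 1) (h : IsPrefixOf n (g * u) w) :
    IsPrefixOf n u w := by
  obtain ⟨L', M, hL'M, hL', rfl, hlenL', hlenL'M⟩ := h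
  obtain ⟨L, hL, rfl, hlenL⟩ := exists_reduced_word u
  refine ⟨L, g :: M, ?_, rfl, ?_, hlenL, ?_⟩
  · simp only [List.mem_append, List.mem_cons] at hL'M ⊢
    rintro x (hx | rfl | hx)
    exacts [hL x hx, hg, hL'M x (.inr hx)]
  · rw [wprod_append L' M, hL', ← wprod_append_singleton, ← wprod_append, List.append_assoc,
      List.singleton_append]
  · simp only [List.length_append, List.length_cons] at hlenL'M ⊢
    omega

lemma isPrefixOf_of_Nminus_subset {u w : Perm (Fin n)} (h : Nminus n u ⊆ Nminus n w) :
    IsPrefixOf n u w := by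
  induction hd : invCount n w - invCount n u using Nat.strong_induction_on generalizing u with
  | _ d ih =>
    by_cases huw : u = w
    · exact huw ▸ isPrefixOf_self w
    obtain ⟨k, hk, hss, hsub⟩ := exists_cover_of_Nminus_subset h huw
    have hg : IsAdjSwap n (swap ⟨k, Nat.lt_of_succ_lt hk⟩ ⟨k + 1, hk⟩) := ⟨k, hk, rfl⟩
    have hlt : invCount n u < invCount n (_ * u) := card_lt_card hss
    have hle : invCount n (_ * u) ≤ invCount n w := card_le_card hsub
    have hlen := (hg.invCount_mul u).resolve_right (by omega)
    exact IsPrefixOf.of_adjSwap_mul hg hlen (ih _ (by omega) hsub rfl)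

end WeakOrder

section Tableau
variable {n : ℕ} {D : Finset (ℕ × ℕ)}

def IsStandardTableau (t : {x // x ∈ D} → Fin n) : Prop :=
  ∀ p q : {x // x ∈ D}, p.1.1 ≤ q.1.1 → p.1.2 ≤ q.1.2 → t p ≤ t q

lemma isStandardTableau_iff_Nminus_subset {tRow tCol : {x // x ∈ D} ≃ Fin n}
    (hRow : ∀ p q : {x // x ∈ D},
      tRow p < tRow q ↔ (p.1.1 < q.1.1 ∨ (p.1.1 = q.1.1 ∧ p.1.2 < q.1.2)))
    (hCol : ∀ p q : {x // x ∈ D},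
      tCol p < tCol q ↔ (p.1.2 < q.1.2 ∨ (p.1.2 = q.1.2 ∧ p.1.1 < q.1.1)))
    {wD : Perm (Fin n)} (hw : ∀ p : {x // x ∈ D}, wD (tRow p) = tCol p) (u : Perm (Fin n)) :
    IsStandardTableau (fun p => u (tRow p)) ↔ Nminus n u ⊆ Nminus n wD := by
  constructor
  · rintro hu ⟨i, j⟩ hij
    obtain ⟨p, rfl⟩ := tRow.surjective i
    obtain ⟨q, rfl⟩ := tRow.surjective j
    obtain ⟨hpq, hinv⟩ := mem_Nminus.1 hij
    have hrow := (hRow p q).1 hpq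
    have hincomp : ¬(p.1.1 ≤ q.1.1 ∧ p.1.2 ≤ q.1.2) := fun h => (hu p q h.1 h.2).not_gt hinv
    simp only [mem_Nminus, hw]
    exact ⟨hpq, (hCol q p).2 (by omega)⟩
  · intro hsub p q h₁ h₂
    rcases lt_trichotomy (tRow p) (tRow q) with hpq | hpq | hpq
    · by_contra! hinv
      have hpair : (tRow p, tRow q) ∈ Nminus n u := mem_Nminus.2 ⟨hpq, hinv⟩
      have hcol := (mem_Nminus.1 (hsub hpair)).2
      rw [hw, hw, hCol] at hcol
      omega
    · exact (congrArg u hpq).le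
    · have := (hRow q p).1 hpq
      omega

end Tableau

theorem stmt_13_general (n : ℕ) (D : Finset (ℕ × ℕ))
    (tRow tCol : {x // x ∈ D} ≃ Fin n)
    (hRow : ∀ p q : {x // x ∈ D},
      tRow p < tRow q ↔ (p.1.1 < q.1.1 ∨ (p.1.1 = q.1.1 ∧ p.1.2 < q.1.2)))
    (hCol : ∀ p q : {x // x ∈ D},
      tCol p < tCol q ↔ (p.1.2 < q.1.2 ∨ (p.1.2 = q.1.2 ∧ p.1.1 < q.1.1)))
    (wD : Equiv.Perm (Fin n)) (hw : ∀ p : {x // x ∈ D}, wD (tRow p) = tCol p) :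
    (∀ u : Equiv.Perm (Fin n),
      (∀ p q : {x // x ∈ D}, p.1.1 ≤ q.1.1 → p.1.2 ≤ q.1.2 →
        u (tRow p) ≤ u (tRow q)) → u ≠ wD →
      ∃ (k : ℕ) (hk : k + 1 < n),
        Nminus n u ⊂
          Nminus n (Equiv.swap (⟨k, Nat.lt_of_succ_lt hk⟩ : Fin n) ⟨k + 1, hk⟩ * u) ∧
        Nminus n (Equiv.swap (⟨k, Nat.lt_of_succ_lt hk⟩ : Fin n) ⟨k + 1, hk⟩ * u) ⊆
          Nminus n wD ∧
        (∀ p q : {x // x ∈ D}, p.1.1 ≤ q.1.1 → p.1.2 ≤ q.1.2 →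
          (Equiv.swap (⟨k, Nat.lt_of_succ_lt hk⟩ : Fin n) ⟨k + 1, hk⟩ * u) (tRow p) ≤
          (Equiv.swap (⟨k, Nat.lt_of_succ_lt hk⟩ : Fin n) ⟨k + 1, hk⟩ * u) (tRow q))) ∧
    Set.BijOn (fun u : Equiv.Perm (Fin n) => (fun p : {x // x ∈ D} => u (tRow p)))
      {u | IsPrefixOf n u wD}
      {t : {x // x ∈ D} → Fin n | Function.Bijective t ∧
        ∀ p q : {x // x ∈ D}, p.1.1 ≤ q.1.1 → p.1.2 ≤ q.1.2 → t p ≤ t q} := by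
  have hstd := isStandardTableau_iff_Nminus_subset hRow hCol hw
  refine ⟨fun u hu hne => ?_, fun u hu => ?_, fun u _ v _ huv => ?_, fun t ⟨ht, htstd⟩ => ?_⟩
  · obtain ⟨k, hk, hss, hsub⟩ := exists_cover_of_Nminus_subset ((hstd u).1 hu) hne
    exact ⟨k, hk, hss, hsub, (hstd _).2 hsub⟩
  · exact ⟨u.bijective.comp tRow.bijective, (hstd u).2 hu.Nminus_subset⟩
  · exact Equiv.ext fun x => by simpa using congrFun huv (tRow.symm x)
  · let u : Perm (Fin n) := tRow.symm.trans (Equiv.ofBijective t ht)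
    have hut : (fun p => u (tRow p)) = t := funext fun p => by simp [u]
    refine ⟨u, isPrefixOf_of_Nminus_subset ((hstd u).1 ?_), hut⟩
    rw [hut]
    exact htstd

/-- Lemma 3.2(ii) together with Result 3.3: if `t^D u` is standard and `u ≠ w_D`
then some `s_k` satisfies `N⁻(u) ⊊ N⁻(u s_k) ⊆ N⁻(w_D)` with `t^D u s_k` again
standard; consequently `u ↦ t^D u` is a bijection from the prefixes of `w_D` onto
the standard `D`-tableaux. -/
theorem stmt_13 (n : ℕ) (D : Finset (ℕ × ℕ)) (hcard : D.card = n)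
    (tRow tCol : {x // x ∈ D} ≃ Fin n)
    (hRow : ∀ p q : {x // x ∈ D},
      tRow p < tRow q ↔ (p.1.1 < q.1.1 ∨ (p.1.1 = q.1.1 ∧ p.1.2 < q.1.2)))
    (hCol : ∀ p q : {x // x ∈ D},
      tCol p < tCol q ↔ (p.1.2 < q.1.2 ∨ (p.1.2 = q.1.2 ∧ p.1.1 < q.1.1)))
    (wD : Equiv.Perm (Fin n)) (hw : ∀ p : {x // x ∈ D}, wD (tRow p) = tCol p) :
    (∀ u : Equiv.Perm (Fin n),
      (∀ p q : {x // x ∈ D}, p.1.1 ≤ q.1.1 → p.1.2 ≤ q.1.2 →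
        u (tRow p) ≤ u (tRow q)) → u ≠ wD →
      ∃ (k : ℕ) (hk : k + 1 < n),
        Nminus n u ⊂
          Nminus n (Equiv.swap (⟨k, Nat.lt_of_succ_lt hk⟩ : Fin n) ⟨k + 1, hk⟩ * u) ∧
        Nminus n (Equiv.swap (⟨k, Nat.lt_of_succ_lt hk⟩ : Fin n) ⟨k + 1, hk⟩ * u) ⊆
          Nminus n wD ∧
        (∀ p q : {x // x ∈ D}, p.1.1 ≤ q.1.1 → p.1.2 ≤ q.1.2 →
          (Equiv.swap (⟨k, Nat.lt_of_succ_lt hk⟩ : Fin n) ⟨k + 1, hk⟩ * u) (tRow p) ≤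
          (Equiv.swap (⟨k, Nat.lt_of_succ_lt hk⟩ : Fin n) ⟨k + 1, hk⟩ * u) (tRow q))) ∧
    Set.BijOn (fun u : Equiv.Perm (Fin n) => (fun p : {x // x ∈ D} => u (tRow p)))
      {u | IsPrefixOf n u wD}
      {t : {x // x ∈ D} → Fin n | Function.Bijective t ∧
        ∀ p q : {x // x ∈ D}, p.1.1 ≤ q.1.1 → p.1.2 ≤ q.1.2 → t p ≤ t q} :=
  stmt_13_general n D tRow tCol hRow hCol wD hw
end

section
/- Let $\lambda$ be a composition of $n$ and let $D$ be a diagram with row-composition $\lambda$ whose node set is the support of an ordered $k$-path $\Pi = (\pi_1, \ldots, \pi_k)$. Let $D(\Pi)$ be the diagram obtained from $D$ by replacing each node of $\pi_j$ by a node in the same row but in column $j$, for $j = 1, \ldots, k$. Then $t^{D(\Pi)} w_D$ is a standard $D(\Pi)$-tableau. -/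
/-- `Prec A B` : for all `(a₁,b₁) ∈ A`, `(a₂,b₂) ∈ B` with `a₁ ≤ a₂`, `b₁ < b₂`. -/
def Prec (A B : Set (ℕ × ℕ)) : Prop :=
  ∀ p ∈ A, ∀ q ∈ B, p.1 ≤ q.1 → p.2 < q.2

/-- A path in a diagram `D`: a nonempty sequence of nodes of `D`,
strictly increasing in row index and weakly increasing in column index. -/
def IsPath (D : Finset (ℕ × ℕ)) (π : List (ℕ × ℕ)) : Prop :=
  π ≠ [] ∧ (∀ p ∈ π, p ∈ D) ∧ π.Chain' (fun p q => p.1 < q.1 ∧ p.2 ≤ q.2)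

/-- A `k`-path: a sequence of pairwise disjoint paths in `D`. -/
def IsKPath (D : Finset (ℕ × ℕ)) (P : List (List (ℕ × ℕ))) : Prop :=
  (∀ π ∈ P, IsPath D π) ∧ P.Pairwise (fun π ρ => ∀ p ∈ π, p ∉ ρ)

/-- The support of a path, as a set of nodes. -/
def supp (π : List (ℕ × ℕ)) : Set (ℕ × ℕ) := {p | p ∈ π}

/-- An ordered `k`-path: the supports of the constituent paths are
successively related by `≺`. -/
def IsOrderedKPath (D : Finset (ℕ × ℕ)) (P : List (List (ℕ × ℕ))) : Prop :=
  IsKPath D P ∧ P.Pairwise (fun π ρ => Prec (supp π) (supp ρ))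

/-- The (0-indexed) entry of a node `p` in the column-filling tableau `t_D`:
the number of nodes of `D` preceding `p` in the column-reading order. -/
def colFill (D : Finset (ℕ × ℕ)) (p : ℕ × ℕ) : ℕ :=
  (D.filter (fun q => q.2 < p.2 ∨ (q.2 = p.2 ∧ q.1 < p.1))).card

/-! Within one path rows determine columns monotonically; across paths `≺` puts the later
path strictly to the right. Either way `p` precedes `q` in the column-reading order. -/

theorem colFill_le_colFill (D : Finset (ℕ × ℕ)) {p q : ℕ × ℕ}
    (h : p.2 < q.2 ∨ (p.2 = q.2 ∧ p.1 ≤ q.1)) : colFill D p ≤ colFill D q :=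
  Finset.card_le_card fun r hr => by
    simp only [Finset.mem_filter] at hr ⊢
    exact ⟨hr.1, by omega⟩

theorem IsPath.pairwise {D : Finset (ℕ × ℕ)} {π : List (ℕ × ℕ)} (hπ : IsPath D π) :
    π.Pairwise fun p q => p.1 < q.1 ∧ p.2 ≤ q.2 :=
  haveI : IsTrans (ℕ × ℕ) fun p q => p.1 < q.1 ∧ p.2 ≤ q.2 :=
    ⟨fun _ _ _ hab hbc => ⟨hab.1.trans hbc.1, hab.2.trans hbc.2⟩⟩
  List.isChain_iff_pairwise.mp hπ.2.2

theorem IsPath.col_le_of_row_le {D : Finset (ℕ × ℕ)} {π : List (ℕ × ℕ)} (hπ : IsPath D π)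
    {p q : ℕ × ℕ} (hp : p ∈ π) (hq : q ∈ π) (hrow : p.1 ≤ q.1) : p.2 ≤ q.2 := by
  rcases eq_or_ne p q with rfl | hne
  · exact le_rfl
  let comparable (a b : ℕ × ℕ) : Prop := (a.1 < b.1 ∧ a.2 ≤ b.2) ∨ (b.1 < a.1 ∧ b.2 ≤ a.2)
  have : Std.Symm comparable := ⟨fun _ _ h => h.symm⟩
  have hpq : comparable p q := (hπ.pairwise.imp (S := comparable) Or.inl).forall hp hq hne
  simp only [comparable] at hpq
  omega

theorem stmt_16_general (D : Finset (ℕ × ℕ)) (P : List (List (ℕ × ℕ)))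
    (hP : IsOrderedKPath D P) :
    ∀ (i j : ℕ) (hi : i < P.length) (hj : j < P.length), i ≤ j →
      ∀ p ∈ P.get ⟨i, hi⟩, ∀ q ∈ P.get ⟨j, hj⟩, p.1 ≤ q.1 →
        colFill D p ≤ colFill D q := by
  intro i j hi hj hij p hp q hq hrow
  apply colFill_le_colFill
  rcases hij.lt_or_eq with hlt | rfl
  · exact Or.inl (List.pairwise_iff_get.mp hP.2 ⟨i, hi⟩ ⟨j, hj⟩ hlt p hp q hq hrow)
  · have hcol := (hP.1.1 _ (P.get_mem _)).col_le_of_row_le hp hq hrow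
    omega

/-- Lemma 3.10: let `D` be the support of an ordered `k`-path `P = (π₁,…,π_k)`,
and let `D(P)` be the diagram obtained by moving each node of `π_j` to column `j`
of the same row.  Then `t^{D(P)} w_D` is a standard `D(P)`-tableau: the entries of
`t_D` placed at positions `(row, path index)` weakly increase towards the
south-east.  Explicitly, for constituent paths `π_i`, `π_j` with `i ≤ j` and
nodes `p ∈ π_i`, `q ∈ π_j` with `p` in a weakly smaller row, the `t_D`-entry of
`p` is at most that of `q`. -/
theorem stmt_16 (D : Finset (ℕ × ℕ)) (P : List (List (ℕ × ℕ)))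
    (hP : IsOrderedKPath D P) (hsupp : ∀ p ∈ D, p ∈ P.flatten) :
    ∀ (i j : ℕ) (hi : i < P.length) (hj : j < P.length), i ≤ j →
      ∀ p ∈ P.get ⟨i, hi⟩, ∀ q ∈ P.get ⟨j, hj⟩, p.1 ≤ q.1 →
        colFill D p ≤ colFill D q :=
  stmt_16_general D P hP
end

section
/- Let $r \ge 2$, $n \ge 2$, and let $\lambda = (\lambda_1, \ldots, \lambda_r)$ be a composition of $n$ with $\lambda_r = 1$. Let $\tilde\lambda = (\lambda_1, \ldots, \lambda_{r-1})$, a composition of $n-1$. If $D$ is an admissible diagram with row-composition $\lambda$, then the diagram $\tilde D$ obtained from $D$ by removing the $r$-th row is an admissible diagram with row-composition $\tilde\lambda$; moreover, for every $k$ with $1 \le k \le r'$ (where $r'$ is the number of parts of $\lambda'$), every $k$-path in $D$ of length $\lambda_1' + \cdots + \lambda_k'$ contains the unique node on the $r$-th row of $D$. -/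
/-- Number of nodes on row `i` of `D` (the part `λ_i` of the row-composition). -/
def rowCount (D : Finset (ℕ × ℕ)) (i : ℕ) : ℕ :=
  (D.filter (fun q => q.1 = i)).card

/-- The `j`-th part `λ'_j` of the conjugate of the row-composition of `D`. -/
def conjRow (D : Finset (ℕ × ℕ)) (j : ℕ) : ℕ :=
  ((D.image Prod.fst).filter (fun i => j ≤ rowCount D i)).card

/-- The number of parts of the conjugate `λ_D'`, i.e. the maximal row length. -/
def maxRow (D : Finset (ℕ × ℕ)) : ℕ :=
  (D.image Prod.fst).sup (rowCount D)

/-- `D` is admissible: it has subsequence type `λ_D'`, i.e. for `1 ≤ k ≤ r'`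
the maximum length of a `k`-path in `D` is `λ'_1 + ⋯ + λ'_k`. -/
def Admissible (D : Finset (ℕ × ℕ)) : Prop :=
  D.Nonempty ∧ ∀ k : ℕ, 1 ≤ k → k ≤ maxRow D →
    (∃ P : List (List (ℕ × ℕ)), IsKPath D P ∧ P.length = k ∧
      P.flatten.length = ∑ j ∈ Finset.Icc 1 k, conjRow D j) ∧
    (∀ P : List (List (ℕ × ℕ)), IsKPath D P → P.length = k →
      P.flatten.length ≤ ∑ j ∈ Finset.Icc 1 k, conjRow D j)


lemma sum_card_filter_le_eq_sum_min {α : Type*} (s : Finset α) (f : α → ℕ) (k : ℕ) :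
    ∑ j ∈ Finset.Icc 1 k, (s.filter (fun i => j ≤ f i)).card = ∑ i ∈ s, min k (f i) := by
  simp_rw [Finset.card_filter]
  rw [Finset.sum_comm]
  refine Finset.sum_congr rfl fun i _ => ?_
  rw [← Finset.card_filter, show (Finset.Icc 1 k).filter (· ≤ f i) = Finset.Icc 1 (min k (f i)) by
    ext j; simp only [Finset.mem_filter, Finset.mem_Icc]; omega]
  simp

lemma sum_conjRow (D : Finset (ℕ × ℕ)) (k : ℕ) :
    ∑ j ∈ Finset.Icc 1 k, conjRow D j = ∑ i ∈ D.image Prod.fst, min k (rowCount D i) :=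
  sum_card_filter_le_eq_sum_min _ _ _

section Paths

variable {D : Finset (ℕ × ℕ)} {π ρ : List (ℕ × ℕ)} {P : List (List (ℕ × ℕ))}

lemma isPath_iff_pairwise :
    IsPath D π ↔ π ≠ [] ∧ (∀ p ∈ π, p ∈ D) ∧
      π.Pairwise (fun p q : ℕ × ℕ => p.1 < q.1 ∧ p.2 ≤ q.2) := by
  let R := fun p q : ℕ × ℕ => p.1 < q.1 ∧ p.2 ≤ q.2
  have : Trans R R R := ⟨fun h₁ h₂ => ⟨h₁.1.trans h₂.1, h₁.2.trans h₂.2⟩⟩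
  exact and_congr_right' (and_congr_right' List.isChain_iff_pairwise)

lemma IsPath.sublist (hπ : IsPath D π) (hρπ : ρ.Sublist π) (hρ : ρ ≠ []) : IsPath D ρ := by
  rw [isPath_iff_pairwise] at hπ ⊢
  exact ⟨hρ, fun p hp => hπ.2.1 p (hρπ.subset hp), hπ.2.2.sublist hρπ⟩

lemma IsPath.pairwise_fst_lt (hπ : IsPath D π) : π.Pairwise (fun p q : ℕ × ℕ => p.1 < q.1) :=
  (isPath_iff_pairwise.mp hπ).2.2.imp (·.1)

lemma IsPath.nodup (hπ : IsPath D π) : π.Nodup :=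
  hπ.pairwise_fst_lt.imp fun h e => h.ne (congrArg Prod.fst e)

lemma IsPath.length_filter_fst_eq_le_one (hπ : IsPath D π) (i : ℕ) :
    (π.filter (fun p => p.1 = i)).length ≤ 1 := by
  have hrow : ∀ p ∈ π.filter (fun p => p.1 = i), p.1 = i := fun p hp => by
    simpa using List.of_mem_filter hp
  have hlt := hπ.pairwise_fst_lt.sublist (List.filter_sublist (p := fun p => decide (p.1 = i)))
  generalize π.filter (fun p => p.1 = i) = l at hrow hlt
  match l, hlt, hrow with
  | [], _, _ | [_], _, _ => simp
  | p :: q :: _, hlt, hrow =>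
    have := List.rel_of_pairwise_cons hlt List.mem_cons_self
    have := hrow p (by simp)
    have := hrow q (by simp)
    omega

lemma isKPath_iff_nodup_flatten :
    IsKPath D P ↔ (∀ π ∈ P, IsPath D π) ∧ P.flatten.Nodup := by
  refine ⟨fun h => ⟨h.1, List.nodup_flatten.mpr ⟨fun π hπ => (h.1 π hπ).nodup,
    h.2.imp fun h p hp hq => h p hp hq⟩⟩,
    fun h => ⟨h.1, (List.nodup_flatten.mp h.2).2.imp fun h p hp hq => h hp hq⟩⟩

lemma IsKPath.mem_of_mem_flatten (h : IsKPath D P) {p : ℕ × ℕ} (hp : p ∈ P.flatten) : p ∈ D := by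
  obtain ⟨π, hπ, hpπ⟩ := List.mem_flatten.mp hp
  exact (h.1 π hπ).2.1 p hpπ

lemma IsKPath.length_filter_fst_eq_le (h : IsKPath D P) (i : ℕ) :
    (P.flatten.filter (fun p => p.1 = i)).length ≤ min P.length (rowCount D i) := by
  refine le_min ?_ ?_
  · rw [List.filter_flatten, List.length_flatten, List.map_map]
    refine (List.sum_le_card_nsmul _ 1 ?_).trans (by simp)
    simp only [List.mem_map, Function.comp_apply]
    rintro _ ⟨π, hπ, rfl⟩
    exact (h.1 π hπ).length_filter_fst_eq_le_one i
  · rw [← List.toFinset_card_of_nodup ((isKPath_iff_nodup_flatten.mp h).2.filter _)]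
    refine Finset.card_le_card fun p hp => ?_
    simp only [List.mem_toFinset, List.mem_filter, decide_eq_true_eq] at hp
    exact Finset.mem_filter.mpr ⟨h.mem_of_mem_flatten hp.1, hp.2⟩

lemma IsKPath.length_flatten_eq_sum (h : IsKPath D P) :
    P.flatten.length = ∑ i ∈ D.image Prod.fst, (P.flatten.filter (fun p => p.1 = i)).length := by
  have hnd := (isKPath_iff_nodup_flatten.mp h).2
  rw [← List.toFinset_card_of_nodup hnd, Finset.card_eq_sum_card_fiberwise fun p hp =>
    Finset.mem_image_of_mem Prod.fst (h.mem_of_mem_flatten (List.mem_toFinset.mp hp))]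
  refine Finset.sum_congr rfl fun i _ => ?_
  rw [← List.toFinset_card_of_nodup (hnd.filter _), List.toFinset_filter]
  simp

lemma IsKPath.length_flatten_le (h : IsKPath D P) :
    P.flatten.length ≤ ∑ j ∈ Finset.Icc 1 P.length, conjRow D j := by
  rw [h.length_flatten_eq_sum, sum_conjRow]
  exact Finset.sum_le_sum fun i _ => h.length_filter_fst_eq_le i

lemma IsKPath.length_filter_fst_eq_of_length_flatten_eq (h : IsKPath D P)
    (hmax : P.flatten.length = ∑ j ∈ Finset.Icc 1 P.length, conjRow D j)
    {i : ℕ} (hi : i ∈ D.image Prod.fst) :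
    (P.flatten.filter (fun p => p.1 = i)).length = min P.length (rowCount D i) := by
  rw [h.length_flatten_eq_sum, sum_conjRow] at hmax
  exact (Finset.sum_eq_sum_iff_of_le fun i _ => h.length_filter_fst_eq_le i).mp hmax i hi

lemma IsKPath.mem_flatten_of_rowCount_eq_one (h : IsKPath D P)
    (hmax : P.flatten.length = ∑ j ∈ Finset.Icc 1 P.length, conjRow D j)
    (hP : 1 ≤ P.length) {i : ℕ} (hrow : rowCount D i = 1) {p : ℕ × ℕ} (hp : p ∈ D)
    (hpi : p.1 = i) : p ∈ P.flatten := by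
  have hlen := h.length_filter_fst_eq_of_length_flatten_eq hmax
    (hpi ▸ Finset.mem_image_of_mem Prod.fst hp)
  rw [hrow] at hlen
  obtain ⟨q, hq⟩ := List.exists_mem_of_length_pos (by omega :
    0 < (P.flatten.filter (fun p => p.1 = i)).length)
  simp only [List.mem_filter, decide_eq_true_eq] at hq
  have hqp : q = p := Finset.card_le_one.mp hrow.le q
    (Finset.mem_filter.mpr ⟨h.mem_of_mem_flatten hq.1, hq.2⟩) p (Finset.mem_filter.mpr ⟨hp, hpi⟩)
  exact hqp ▸ hq.1

lemma IsKPath.exists_filter (h : IsKPath D P) (s : ℕ × ℕ → Prop) [DecidablePred s] :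
    ∃ Q, IsKPath (D.filter s) Q ∧ Q.length ≤ P.length ∧ Q.flatten = P.flatten.filter s := by
  refine ⟨(P.map (List.filter s)).filter (fun π => !π.isEmpty), ?_, ?_, ?_⟩
  · rw [isKPath_iff_nodup_flatten, List.flatten_filter_not_isEmpty, ← List.filter_flatten]
    refine ⟨fun ρ hρ => ?_, (isKPath_iff_nodup_flatten.mp h).2.filter _⟩
    simp only [List.mem_filter, List.mem_map, Bool.not_eq_true', List.isEmpty_eq_false_iff] at hρ
    obtain ⟨⟨π, hπ, rfl⟩, hne⟩ := hρ
    refine ⟨hne, fun p hp => ?_, ((h.1 π hπ).sublist List.filter_sublist hne).2.2⟩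
    simp only [List.mem_filter, decide_eq_true_eq] at hp
    exact Finset.mem_filter.mpr ⟨(h.1 π hπ).2.1 p hp.1, hp.2⟩
  · exact (List.length_filter_le _ _).trans (List.length_map _).le
  · rw [List.flatten_filter_not_isEmpty, List.filter_flatten]

lemma IsKPath.exists_length_succ (h : IsKPath D P) (hlt : P.length < P.flatten.length) :
    ∃ Q, IsKPath D Q ∧ Q.length = P.length + 1 ∧ Q.flatten = P.flatten := by
  obtain ⟨σ, hσ, hσlen⟩ : ∃ σ ∈ P, 2 ≤ σ.length := by
    by_contra! hshort
    have := List.sum_le_card_nsmul (P.map List.length) 1 (by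
      simpa using fun σ hσ => Nat.le_of_lt_succ (hshort σ hσ))
    simp only [List.length_map, smul_eq_mul, mul_one] at this
    rw [List.length_flatten] at hlt
    omega
  obtain ⟨s, t, rfl, ht⟩ : ∃ s t, σ = s :: t ∧ t ≠ [] := by
    match σ, hσlen with
    | s :: t₀ :: t, _ => exact ⟨s, t₀ :: t, rfl, List.cons_ne_nil _ _⟩
  obtain ⟨C, F, rfl⟩ := List.append_of_mem hσ
  rw [isKPath_iff_nodup_flatten] at h
  have hσpath := h.1 _ hσ
  refine ⟨C ++ [s] :: t :: F, isKPath_iff_nodup_flatten.mpr ⟨fun ρ hρ => ?_, by simpa using h.2⟩,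
    by simp; omega, by simp⟩
  simp only [List.mem_append, List.mem_cons] at hρ
  rcases hρ with hρ | rfl | rfl | hρ
  · exact h.1 ρ (by simp [hρ])
  · exact hσpath.sublist (by simp) (List.cons_ne_nil _ _)
  · exact hσpath.sublist (List.sublist_cons_self _ _) ht
  · exact h.1 ρ (by simp [hρ])

lemma IsKPath.exists_length_eq (h : IsKPath D P) {k : ℕ} (hPk : P.length ≤ k)
    (hk : k ≤ P.flatten.length) :
    ∃ Q, IsKPath D Q ∧ Q.length = k ∧ Q.flatten = P.flatten := by
  induction k, hPk using Nat.le_induction with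
  | base => exact ⟨P, h, rfl, rfl⟩
  | succ k _ ih =>
    obtain ⟨Q, hQ, rfl, hQP⟩ := ih (by omega)
    obtain ⟨R, hR, hRlen, hRQ⟩ := hQ.exists_length_succ (by rw [hQP]; omega)
    exact ⟨R, hR, hRlen, hRQ.trans hQP⟩

end Paths

lemma sum_conjRow_mono (D : Finset (ℕ × ℕ)) {j k : ℕ} (hjk : j ≤ k) :
    ∑ i ∈ Finset.Icc 1 j, conjRow D i ≤ ∑ i ∈ Finset.Icc 1 k, conjRow D i :=
  Finset.sum_le_sum_of_subset (Finset.Icc_subset_Icc_right hjk)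

lemma le_sum_conjRow {D : Finset (ℕ × ℕ)} {k : ℕ} (hk : k ≤ maxRow D) :
    k ≤ ∑ j ∈ Finset.Icc 1 k, conjRow D j := by
  simpa using Finset.card_nsmul_le_sum (Finset.Icc 1 k) (conjRow D) 1 fun j hj => by
    obtain ⟨i, hi, hji⟩ := (Finset.le_sup_iff (show 0 < j by simp at hj; omega)).mp
      ((Finset.mem_Icc.mp hj).2.trans hk)
    exact Finset.card_pos.mpr ⟨i, Finset.mem_filter.mpr ⟨hi, hji⟩⟩

lemma maxRow_filter_le (D : Finset (ℕ × ℕ)) (s : ℕ × ℕ → Prop) [DecidablePred s] :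
    maxRow (D.filter s) ≤ maxRow D :=
  calc maxRow (D.filter s) ≤ (D.image Prod.fst).sup (rowCount (D.filter s)) :=
        Finset.sup_mono (Finset.image_subset_image (Finset.filter_subset _ _))
    _ ≤ maxRow D := Finset.sup_mono_fun fun _ _ =>
        Finset.card_le_card (Finset.filter_subset_filter _ (Finset.filter_subset _ _))

lemma image_fst_filter_fst_ne (D : Finset (ℕ × ℕ)) (r : ℕ) :
    (D.filter (fun p => p.1 ≠ r)).image Prod.fst = (D.image Prod.fst).erase r := by
  ext i
  simp only [Finset.mem_image, Finset.mem_filter, Finset.mem_erase]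
  constructor
  · rintro ⟨p, ⟨hp, hpr⟩, rfl⟩
    exact ⟨hpr, p, hp, rfl⟩
  · rintro ⟨hir, p, hp, rfl⟩
    exact ⟨p, ⟨hp, hir⟩, rfl⟩

lemma rowCount_filter_fst_ne (D : Finset (ℕ × ℕ)) {r i : ℕ} (hi : i ≠ r) :
    rowCount (D.filter (fun p => p.1 ≠ r)) i = rowCount D i := by
  unfold rowCount
  rw [Finset.filter_filter]
  congr 1
  exact Finset.filter_congr fun p _ => ⟨And.right, fun h => ⟨h ▸ hi, h⟩⟩

lemma sum_conjRow_filter_fst_ne_add_one {D : Finset (ℕ × ℕ)} {r : ℕ} (hr : rowCount D r = 1)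
    {k : ℕ} (hk : 1 ≤ k) :
    ∑ j ∈ Finset.Icc 1 k, conjRow (D.filter (fun p => p.1 ≠ r)) j + 1
      = ∑ j ∈ Finset.Icc 1 k, conjRow D j := by
  have hrD : r ∈ D.image Prod.fst := by
    obtain ⟨p, hp⟩ := Finset.card_pos.mp (hr ▸ Nat.one_pos)
    rw [Finset.mem_filter] at hp
    exact hp.2 ▸ Finset.mem_image_of_mem Prod.fst hp.1
  rw [sum_conjRow, sum_conjRow, image_fst_filter_fst_ne, ← Finset.add_sum_erase _ _ hrD, hr,
    Finset.sum_congr rfl fun i hi => by rw [rowCount_filter_fst_ne D (Finset.ne_of_mem_erase hi)]]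
  omega

lemma Admissible.filter_fst_ne {D : Finset (ℕ × ℕ)} (hadm : Admissible D) {r : ℕ}
    (hr : rowCount D r = 1) (hne : (D.filter (fun p => p.1 ≠ r)).Nonempty) :
    Admissible (D.filter (fun p => p.1 ≠ r)) := by
  refine ⟨hne, fun k hk hkE => ⟨?_, fun P hP hPk => hPk ▸ hP.length_flatten_le⟩⟩
  have hbound := sum_conjRow_filter_fst_ne_add_one hr hk
  obtain ⟨⟨P, hP, hPk, hPmax⟩, -⟩ := hadm.2 k hk (hkE.trans (maxRow_filter_le _ _))
  obtain ⟨Q, hQ, hQk, hQP⟩ := hP.exists_filter (fun p => p.1 ≠ r)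
  have hQlen :
      Q.flatten.length = ∑ j ∈ Finset.Icc 1 k, conjRow (D.filter (fun p => p.1 ≠ r)) j := by
    have hrow : (P.flatten.filter (fun p => p.1 = r)).length ≤ 1 :=
      hr ▸ (hP.length_filter_fst_eq_le r).trans (min_le_right _ _)
    have hsplit := List.length_eq_length_filter_add (l := P.flatten) (fun p => p.1 = r)
    have := hQ.length_flatten_le.trans (sum_conjRow_mono _ (hQk.trans hPk.le))
    rw [hQP] at this ⊢
    simp only [decide_not] at this ⊢
    omega
  obtain ⟨R, hR, hRk, hRQ⟩ := hQ.exists_length_eq (hQk.trans hPk.le) (hQlen ▸ le_sum_conjRow hkE)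
  exact ⟨R, hR, hRk, hRQ ▸ hQlen⟩

theorem stmt_18_general (r : ℕ) (hr : 2 ≤ r)
    (D : Finset (ℕ × ℕ))
    (hrows : D.image Prod.fst = Finset.Icc 1 r)
    (hlast : rowCount D r = 1) (hadm : Admissible D) :
    (Admissible (D.filter (fun p => p.1 ≠ r)) ∧
      (D.filter (fun p => p.1 ≠ r)).image Prod.fst = Finset.Icc 1 (r - 1) ∧
      (∀ i : ℕ, i ≤ r - 1 →
        rowCount (D.filter (fun p => p.1 ≠ r)) i = rowCount D i)) ∧
    (∀ k : ℕ, 1 ≤ k → k ≤ maxRow D →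
      ∀ P : List (List (ℕ × ℕ)), IsKPath D P → P.length = k →
        P.flatten.length = ∑ j ∈ Finset.Icc 1 k, conjRow D j →
          ∀ p ∈ D, p.1 = r → p ∈ P.flatten) := by
  have hrowsE : (D.filter (fun p => p.1 ≠ r)).image Prod.fst = Finset.Icc 1 (r - 1) := by
    rw [image_fst_filter_fst_ne, hrows, Finset.Icc_erase_right]
    ext i
    simp only [Finset.mem_Ico, Finset.mem_Icc]
    omega
  have hne : (D.filter (fun p => p.1 ≠ r)).Nonempty :=
    Finset.image_nonempty.mp (hrowsE ▸ Finset.nonempty_Icc.mpr (by omega))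
  refine ⟨⟨hadm.filter_fst_ne hlast hne, hrowsE, fun i hi => rowCount_filter_fst_ne D (by omega)⟩,
    fun k hk _ P hP hPk hPmax p hp hpr => ?_⟩
  exact hP.mem_flatten_of_rowCount_eq_one (hPk ▸ hPmax) (hPk ▸ hk) (hpr ▸ hlast) hp hpr

/-- Lemma 4.1: `λ` a composition of `n` with `r ≥ 2` parts and last part
`λ_r = 1`, `D` an admissible diagram with row-composition `λ` (rows `1,…,r`,
one node on row `r`).  Then the diagram obtained by removing row `r` is
admissible with row-composition `(λ_1,…,λ_{r-1})`, and every `k`-path in `D` of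
length `λ'_1 + ⋯ + λ'_k` (for `1 ≤ k ≤ r'`) contains the node on row `r`. -/
theorem stmt_18 (r n : ℕ) (hr : 2 ≤ r) (hn : 2 ≤ n)
    (D : Finset (ℕ × ℕ)) (hcard : D.card = n)
    (hrows : D.image Prod.fst = Finset.Icc 1 r)
    (hlast : rowCount D r = 1) (hadm : Admissible D) :
    (Admissible (D.filter (fun p => p.1 ≠ r)) ∧
      (D.filter (fun p => p.1 ≠ r)).image Prod.fst = Finset.Icc 1 (r - 1) ∧
      (∀ i : ℕ, i ≤ r - 1 →
        rowCount (D.filter (fun p => p.1 ≠ r)) i = rowCount D i)) ∧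
    (∀ k : ℕ, 1 ≤ k → k ≤ maxRow D →
      ∀ P : List (List (ℕ × ℕ)), IsKPath D P → P.length = k →
        P.flatten.length = ∑ j ∈ Finset.Icc 1 k, conjRow D j →
          ∀ p ∈ D, p.1 = r → p ∈ P.flatten) :=
  stmt_18_general r hr D hrows hlast hadm
end
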